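/- Let A, B be n×n positive semidefinite complex matrices and let t ∈ (0,1). Then ‖A^t B^(1-t) + B^t A^(1-t)‖_F ≤ 2^(max{2|t − 1/2| − 1/2, 0}) · ‖A + B‖_F, where ‖·‖_F is the Frobenius norm. -/

import Mathlib

open scoped ComplexOrder

/-- The real power `A ^ r` of a (positive semidefinite) matrix, defined via the
continuous functional calculus (equivalently, via the spectral decomposition). -/
noncomputable def matRpow {n : ℕ} (A : Matrix (Fin n) (Fin n) ℂ) (r : ℝ) :
    Matrix (Fin n) (Fin n) ℂ :=
  cfc (fun x : ℝ => x ^ r) A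

/-- The Frobenius (Hilbert–Schmidt) norm `‖M‖_F = (∑_{i,j} |M_{ij}|²)^{1/2}`. -/
noncomputable def frobeniusNorm' {n : ℕ} (M : Matrix (Fin n) (Fin n) ℂ) : ℝ :=
  Real.sqrt (∑ i, ∑ j, ‖M i j‖ ^ 2)

/-!
Diagonalize `A = U diag(λ) U*`, `B = V diag(μ) V*` and put `W = U* V`. By unitary invariance of the
Frobenius norm, `‖f(A) g(B)‖² = ∑ᵢⱼ (f λᵢ g μⱼ)² |Wᵢⱼ|²` and `‖A + B‖² = ∑ᵢⱼ (λᵢ + μⱼ)² |Wᵢⱼ|²`,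
while `‖B^t A^(1-t)‖ = ‖A^(1-t) B^t‖` by taking adjoints. Together with
`(x + y)² ≤ 2 (x² + y²)` this reduces the theorem to the scalar inequality
`2 (a^t b^(1-t) + a^(1-t) b^t) ≤ 2^max(4|t - 1/2| - 1, 0) (l + m)²` for `a = l²`, `b = m²`.
Its left side is invariant under `t ↦ 1 - t`, and `t ↦ K^t (a^t b^(1-t) + a^(1-t) b^t)` is a sum
of two exponentials in `t`, hence convex, for every `K > 0`. So on `[1/4, 3/4]` (with `K = 1`) and
on `[0, 1/4]` (with `K = 16`) it is bounded by its values at the endpoints `0, 1/4, 3/4`, where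
the inequality is elementary.
-/

open Set Matrix

noncomputable def heinzSum (a b t : ℝ) : ℝ := a ^ t * b ^ (1 - t) + a ^ (1 - t) * b ^ t

lemma heinzSum_comm (a b t : ℝ) : heinzSum a b t = heinzSum b a t := by
  unfold heinzSum; ring

lemma heinzSum_one_sub (a b t : ℝ) : heinzSum a b (1 - t) = heinzSum a b t := by
  unfold heinzSum; rw [sub_sub_cancel]; ring

lemma heinzSum_at_zero (a b : ℝ) : heinzSum a b 0 = a + b := by
  simp [heinzSum, add_comm]

lemma heinzSum_sq_sq {l m : ℝ} (hl : 0 ≤ l) (hm : 0 ≤ m) (t : ℝ) :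
    heinzSum (l ^ 2) (m ^ 2) t = (l ^ t * m ^ (1 - t)) ^ 2 + (l ^ (1 - t) * m ^ t) ^ 2 := by
  simp only [heinzSum, mul_pow, Real.rpow_pow_comm hl, Real.rpow_pow_comm hm]

lemma heinzSum_zero_left {b t : ℝ} (ht : t ∈ Ioo 0 1) : heinzSum 0 b t = 0 := by
  simp [heinzSum, Real.zero_rpow ht.1.ne', Real.zero_rpow (sub_pos.2 ht.2).ne']

lemma convexOn_rpow_mul_rpow_one_sub {a b : ℝ} (ha : 0 < a) (hb : 0 < b) :
    ConvexOn ℝ univ fun t : ℝ => a ^ t * b ^ (1 - t) := by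
  refine ((convexOn_rpow_left (div_pos ha hb)).smul hb.le).congr fun t _ => ?_
  simp only [smul_eq_mul, Real.div_rpow ha.le hb.le, Real.rpow_sub hb, Real.rpow_one]
  field_simp

lemma convexOn_rpow_mul_heinzSum {a b K : ℝ} (ha : 0 < a) (hb : 0 < b) (hK : 0 < K) :
    ConvexOn ℝ univ fun t => K ^ t * heinzSum a b t := by
  refine ((convexOn_rpow_mul_rpow_one_sub (mul_pos hK ha) hb).add
    (convexOn_rpow_mul_rpow_one_sub (mul_pos hK hb) ha)).congr fun t _ => ?_
  simp only [Pi.add_apply, heinzSum, Real.mul_rpow hK.le ha.le, Real.mul_rpow hK.le hb.le]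
  ring

lemma two_mul_heinzSum_sq_quarter_le {l m : ℝ} (hl : 0 ≤ l) (hm : 0 ≤ m) :
    2 * heinzSum (l ^ 2) (m ^ 2) (1 / 4) ≤ (l + m) ^ 2 := by
  obtain ⟨s, hs, rfl⟩ : ∃ s, 0 ≤ s ∧ l = s ^ 2 := ⟨√l, Real.sqrt_nonneg l, (Real.sq_sqrt hl).symm⟩
  obtain ⟨r, hr, rfl⟩ : ∃ r, 0 ≤ r ∧ m = r ^ 2 := ⟨√m, Real.sqrt_nonneg m, (Real.sq_sqrt hm).symm⟩
  have hpow : ∀ x : ℝ, 0 ≤ x → ∀ e : ℝ, ((x ^ 2) ^ 2) ^ e = x ^ (4 * e) := by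
    intro x hx e
    rw [← pow_mul, ← Real.rpow_natCast_mul hx]; norm_num
  simp only [heinzSum, hpow s hs, hpow r hr]
  norm_num
  nlinarith [mul_nonneg (add_nonneg (sq_nonneg s) (sq_nonneg r)) (sq_nonneg (s - r)),
    mul_nonneg hs hr]

section ScalarBound

variable {l m t : ℝ}

lemma two_mul_heinzSum_sq_le_of_mem_Icc_quarter (hl : 0 < l) (hm : 0 < m)
    (ht : t ∈ Icc (1 / 4) (3 / 4)) : 2 * heinzSum (l ^ 2) (m ^ 2) t ≤ (l + m) ^ 2 := by
  have h := (convexOn_rpow_mul_heinzSum (pow_pos hl 2) (pow_pos hm 2) one_pos).le_max_of_mem_Icc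
    (mem_univ _) (mem_univ _) ht
  simp only [Real.one_rpow, one_mul] at h
  rw [show (3 / 4 : ℝ) = 1 - 1 / 4 by norm_num, heinzSum_one_sub, max_self] at h
  linarith [two_mul_heinzSum_sq_quarter_le hl.le hm.le]

lemma two_mul_heinzSum_sq_le_of_mem_Icc_zero (hl : 0 < l) (hm : 0 < m)
    (ht : t ∈ Icc 0 (1 / 4)) : 2 * heinzSum (l ^ 2) (m ^ 2) t ≤ 2 ^ (1 - 4 * t) * (l + m) ^ 2 := by
  have h := (convexOn_rpow_mul_heinzSum (pow_pos hl 2) (pow_pos hm 2)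
    (by norm_num : (0 : ℝ) < 2 ^ 4)).le_max_of_mem_Icc (mem_univ _) (mem_univ _) ht
  have hweight : ∀ s : ℝ, ((2 : ℝ) ^ 4) ^ s = 2 ^ (4 * s) := fun s => by
    rw [← Real.rpow_natCast_mul zero_le_two]; norm_num
  rw [hweight, hweight, hweight, heinzSum_at_zero] at h
  rw [mul_zero, Real.rpow_zero, one_mul, show (4 : ℝ) * (1 / 4) = 1 by norm_num,
    Real.rpow_one] at h
  have hmax : max (l ^ 2 + m ^ 2) (2 * heinzSum (l ^ 2) (m ^ 2) (1 / 4)) ≤ (l + m) ^ 2 :=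
    max_le (by nlinarith [mul_pos hl hm]) (two_mul_heinzSum_sq_quarter_le hl.le hm.le)
  have hsplit : (2 : ℝ) = 2 ^ (1 - 4 * t) * 2 ^ (4 * t) := by
    rw [← Real.rpow_add zero_lt_two]; norm_num
  calc 2 * heinzSum (l ^ 2) (m ^ 2) t
      = 2 ^ (1 - 4 * t) * (2 ^ (4 * t) * heinzSum (l ^ 2) (m ^ 2) t) := by
        rw [← mul_assoc, ← hsplit]
    _ ≤ 2 ^ (1 - 4 * t) * (l + m) ^ 2 := by gcongr; exact h.trans hmax

lemma two_mul_heinzSum_sq_le_of_mem_Icc_zero_half (hl : 0 < l) (hm : 0 < m)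
    (ht : t ∈ Icc 0 (1 / 2)) :
    2 * heinzSum (l ^ 2) (m ^ 2) t ≤ 2 ^ max (1 - 4 * t) 0 * (l + m) ^ 2 := by
  rcases le_total t (1 / 4) with hq | hq
  · rw [max_eq_left (by linarith)]
    exact two_mul_heinzSum_sq_le_of_mem_Icc_zero hl hm ⟨ht.1, hq⟩
  · rw [max_eq_right (by linarith), Real.rpow_zero, one_mul]
    exact two_mul_heinzSum_sq_le_of_mem_Icc_quarter hl hm ⟨hq, by linarith [ht.2]⟩

lemma two_mul_heinzSum_sq_le (hl : 0 ≤ l) (hm : 0 ≤ m) (ht : t ∈ Ioo 0 1) :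
    2 * heinzSum (l ^ 2) (m ^ 2) t ≤ (2 ^ max (2 * |t - 1 / 2| - 1 / 2) 0) ^ 2 * (l + m) ^ 2 := by
  have hconst : ((2 : ℝ) ^ max (2 * |t - 1 / 2| - 1 / 2) 0) ^ 2
      = 2 ^ max (4 * |t - 1 / 2| - 1) 0 := by
    rw [← Real.rpow_mul_natCast zero_le_two, Nat.cast_ofNat, max_mul_of_nonneg _ _ zero_le_two]
    ring_nf
  rw [hconst]
  rcases hl.eq_or_lt with rfl | hl
  · rw [zero_pow two_ne_zero, heinzSum_zero_left ht, mul_zero]; positivity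
  rcases hm.eq_or_lt with rfl | hm
  · rw [zero_pow two_ne_zero, heinzSum_comm, heinzSum_zero_left ht, mul_zero]; positivity
  rcases le_total t (1 / 2) with h | h
  · rw [abs_of_nonpos (by linarith)]
    convert two_mul_heinzSum_sq_le_of_mem_Icc_zero_half hl hm ⟨ht.1.le, h⟩ using 4
    ring
  · rw [abs_of_nonneg (by linarith), ← heinzSum_one_sub]
    convert two_mul_heinzSum_sq_le_of_mem_Icc_zero_half hl hm (t := 1 - t)
      ⟨by linarith [ht.2], by linarith⟩ using 4
    ring

end ScalarBound

attribute [local instance] Matrix.frobeniusNormedAddCommGroup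

namespace Matrix

variable {𝕜 ι : Type*} [RCLike 𝕜] [Fintype ι]

lemma frobenius_norm_sq_eq_sum (M : Matrix ι ι 𝕜) : ‖M‖ ^ 2 = ∑ i, ∑ j, ‖M i j‖ ^ 2 := by
  rw [frobenius_norm_def, ← Real.rpow_natCast, ← Real.rpow_mul (by positivity)]
  norm_num

lemma frobenius_norm_sq_eq_re_trace (M : Matrix ι ι 𝕜) :
    ‖M‖ ^ 2 = RCLike.re (Mᴴ * M).trace := by
  rw [frobenius_norm_sq_eq_sum, trace, map_sum, Finset.sum_comm]
  refine Finset.sum_congr rfl fun j _ => ?_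
  simp [mul_apply, RCLike.conj_mul]

variable [DecidableEq ι]

lemma frobenius_norm_unitary_mul {U : Matrix ι ι 𝕜} (hU : U ∈ unitaryGroup ι 𝕜)
    (M : Matrix ι ι 𝕜) : ‖U * M‖ = ‖M‖ := by
  refine (pow_left_inj₀ (norm_nonneg _) (norm_nonneg _) two_ne_zero).1 ?_
  rw [frobenius_norm_sq_eq_re_trace, frobenius_norm_sq_eq_re_trace, conjTranspose_mul, mul_assoc,
    ← mul_assoc Uᴴ, ← star_eq_conjTranspose U, (mem_unitaryGroup_iff').1 hU, one_mul]

lemma frobenius_norm_unitary_mul_mul_unitary {U V : Matrix ι ι 𝕜} (hU : U ∈ unitaryGroup ι 𝕜)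
    (hV : V ∈ unitaryGroup ι 𝕜) (M : Matrix ι ι 𝕜) : ‖U * M * V‖ = ‖M‖ := by
  rw [← frobenius_norm_conjTranspose, conjTranspose_mul, ← star_eq_conjTranspose V,
    frobenius_norm_unitary_mul (Unitary.star_mem hV), frobenius_norm_conjTranspose,
    frobenius_norm_unitary_mul hU]

lemma conjTranspose_cfc_mul_cfc (f g : ℝ → ℝ) (A B : Matrix ι ι 𝕜) :
    (cfc f A * cfc g B)ᴴ = cfc g B * cfc f A := by
  rw [conjTranspose_mul, ← star_eq_conjTranspose, ← star_eq_conjTranspose,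
    IsSelfAdjoint.cfc.star_eq, IsSelfAdjoint.cfc.star_eq]

variable {A B : Matrix ι ι 𝕜}

namespace IsHermitian

lemma star_eigenvectorUnitary_mul_cfc (hA : A.IsHermitian) (f : ℝ → ℝ) :
    (star hA.eigenvectorUnitary : Matrix ι ι 𝕜) * cfc f A
      = diagonal (RCLike.ofReal ∘ f ∘ hA.eigenvalues) *
        (star hA.eigenvectorUnitary : Matrix ι ι 𝕜) := by
  rw [hA.cfc_eq, IsHermitian.cfc, Unitary.conjStarAlgAut_apply, ← mul_assoc, ← mul_assoc,
    Unitary.coe_star_mul_self, one_mul]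

lemma cfc_mul_eigenvectorUnitary (hA : A.IsHermitian) (f : ℝ → ℝ) :
    cfc f A * (hA.eigenvectorUnitary : Matrix ι ι 𝕜)
      = (hA.eigenvectorUnitary : Matrix ι ι 𝕜) *
        diagonal (RCLike.ofReal ∘ f ∘ hA.eigenvalues) := by
  rw [hA.cfc_eq, IsHermitian.cfc, Unitary.conjStarAlgAut_apply, mul_assoc,
    Unitary.coe_star_mul_self, mul_one]

noncomputable def eigenOverlap (hA : A.IsHermitian) (hB : B.IsHermitian) : Matrix ι ι 𝕜 :=
  (star hA.eigenvectorUnitary : Matrix ι ι 𝕜) * hB.eigenvectorUnitary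

lemma frobenius_norm_sq_cfc_mul_cfc (hA : A.IsHermitian) (hB : B.IsHermitian) (f g : ℝ → ℝ) :
    ‖cfc f A * cfc g B‖ ^ 2 = ∑ i, ∑ j,
      (f (hA.eigenvalues i) * g (hB.eigenvalues j)) ^ 2 * ‖eigenOverlap hA hB i j‖ ^ 2 := by
  have hconj : (star hA.eigenvectorUnitary : Matrix ι ι 𝕜) * (cfc f A * cfc g B) *
      (hB.eigenvectorUnitary : Matrix ι ι 𝕜) = diagonal (RCLike.ofReal ∘ f ∘ hA.eigenvalues) *
        eigenOverlap hA hB * diagonal (RCLike.ofReal ∘ g ∘ hB.eigenvalues) := by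
    rw [← mul_assoc, hA.star_eigenvectorUnitary_mul_cfc, mul_assoc, mul_assoc,
      hB.cfc_mul_eigenvectorUnitary, eigenOverlap]
    simp only [mul_assoc]
  rw [← frobenius_norm_unitary_mul_mul_unitary (Unitary.star_mem hA.eigenvectorUnitary.2)
    hB.eigenvectorUnitary.2, hconj, frobenius_norm_sq_eq_sum]
  simp only [mul_diagonal, diagonal_mul, Function.comp_apply, norm_mul, RCLike.norm_ofReal,
    mul_pow, sq_abs]
  exact Finset.sum_congr rfl fun i _ => Finset.sum_congr rfl fun j _ => by ring

lemma frobenius_norm_sq_add (hA : A.IsHermitian) (hB : B.IsHermitian) :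
    ‖A + B‖ ^ 2 = ∑ i, ∑ j,
      (hA.eigenvalues i + hB.eigenvalues j) ^ 2 * ‖eigenOverlap hA hB i j‖ ^ 2 := by
  have hconj : (star hA.eigenvectorUnitary : Matrix ι ι 𝕜) * (A + B) *
      (hB.eigenvectorUnitary : Matrix ι ι 𝕜) =
        diagonal (RCLike.ofReal ∘ hA.eigenvalues) * eigenOverlap hA hB
        + eigenOverlap hA hB * diagonal (RCLike.ofReal ∘ hB.eigenvalues) := by
    have hAdiag : (star hA.eigenvectorUnitary : Matrix ι ι 𝕜) * A = diagonal
        (RCLike.ofReal ∘ hA.eigenvalues) * (star hA.eigenvectorUnitary : Matrix ι ι 𝕜) := by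
      -- `rw` cannot abstract `A` here: `hA.eigenvectorUnitary` depends on it
      conv_lhs => arg 2; rw [← cfc_id ℝ A hA]
      exact hA.star_eigenvectorUnitary_mul_cfc id
    have hBdiag : B * (hB.eigenvectorUnitary : Matrix ι ι 𝕜)
        = (hB.eigenvectorUnitary : Matrix ι ι 𝕜) * diagonal (RCLike.ofReal ∘ hB.eigenvalues) := by
      conv_lhs => arg 1; rw [← cfc_id ℝ B hB]
      exact hB.cfc_mul_eigenvectorUnitary id
    rw [mul_add, add_mul, hAdiag, mul_assoc _ B, hBdiag, eigenOverlap]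
    simp only [mul_assoc]
  rw [← frobenius_norm_unitary_mul_mul_unitary (Unitary.star_mem hA.eigenvectorUnitary.2)
    hB.eigenvectorUnitary.2, hconj, frobenius_norm_sq_eq_sum]
  refine Finset.sum_congr rfl fun i _ => Finset.sum_congr rfl fun j _ => ?_
  simp only [add_apply, mul_diagonal, diagonal_mul, Function.comp_apply]
  rw [mul_comm _ (RCLike.ofReal _ : 𝕜), ← add_mul, ← RCLike.ofReal_add, norm_mul,
    RCLike.norm_ofReal, mul_pow, sq_abs]

end IsHermitian

namespace PosSemidef

lemma frobenius_norm_sq_rpow_mul_rpow_add (hA : A.PosSemidef) (hB : B.PosSemidef) (t : ℝ) :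
    ‖cfc (fun x : ℝ => x ^ t) A * cfc (fun x : ℝ => x ^ (1 - t)) B‖ ^ 2
      + ‖cfc (fun x : ℝ => x ^ (1 - t)) A * cfc (fun x : ℝ => x ^ t) B‖ ^ 2
      = ∑ i, ∑ j,
          heinzSum (hA.isHermitian.eigenvalues i ^ 2) (hB.isHermitian.eigenvalues j ^ 2) t *
            ‖hA.isHermitian.eigenOverlap hB.isHermitian i j‖ ^ 2 := by
  rw [hA.isHermitian.frobenius_norm_sq_cfc_mul_cfc hB.isHermitian,
    hA.isHermitian.frobenius_norm_sq_cfc_mul_cfc hB.isHermitian, ← Finset.sum_add_distrib]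
  refine Finset.sum_congr rfl fun i _ => ?_
  rw [← Finset.sum_add_distrib]
  refine Finset.sum_congr rfl fun j _ => ?_
  rw [heinzSum_sq_sq (hA.eigenvalues_nonneg i) (hB.eigenvalues_nonneg j)]
  ring

end PosSemidef

end Matrix

lemma frobeniusNorm'_eq_norm {n : ℕ} (M : Matrix (Fin n) (Fin n) ℂ) : frobeniusNorm' M = ‖M‖ := by
  rw [frobeniusNorm', ← frobenius_norm_sq_eq_sum, Real.sqrt_sq (norm_nonneg _)]

theorem crossed_heinz_bound_frobenius {n : ℕ} (A B : Matrix (Fin n) (Fin n) ℂ)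
    (hA : A.PosSemidef) (hB : B.PosSemidef) (t : ℝ) (ht : t ∈ Set.Ioo (0 : ℝ) 1) :
    frobeniusNorm' (matRpow A t * matRpow B (1 - t) + matRpow B t * matRpow A (1 - t)) ≤
      (2 : ℝ) ^ max (2 * |t - 1 / 2| - 1 / 2) (0 : ℝ) * frobeniusNorm' (A + B) := by
  rw [frobeniusNorm'_eq_norm, frobeniusNorm'_eq_norm]
  refine (norm_add_le _ _).trans ?_
  rw [← frobenius_norm_conjTranspose (matRpow B t * _), matRpow, matRpow, matRpow, matRpow,
    conjTranspose_cfc_mul_cfc]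
  refine (pow_le_pow_iff_left₀ (by positivity) (by positivity) two_ne_zero).1
    (add_sq_le.trans ?_)
  rw [hA.frobenius_norm_sq_rpow_mul_rpow_add hB, mul_pow,
    hA.isHermitian.frobenius_norm_sq_add hB.isHermitian]
  simp only [Finset.mul_sum, ← mul_assoc]
  gcongr ∑ i, ∑ j, ?_ * _ with i _ j _
  exact two_mul_heinzSum_sq_le (hA.eigenvalues_nonneg i) (hB.eigenvalues_nonneg j) ht
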